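/- For every d \geq 2 there exists \lambda \in \mathbb{C} with \lambda \neq 0 such that P_{d,d}(\lambda) = 0, P_{d+1,d+1}(\lambda) \neq 0, and P_{d+1,d-1}(\lambda) P_{d+2,d-1}(\lambda) - P_{d+1,d-2}(\lambda) P_{d+2,d}(\lambda) \neq 0. -/

import Mathlib

/-- The multinomial coefficient `(a+b+c)! / (a! b! c!)`. -/
def mult3 (a b c : ℕ) : ℕ := (a + b + c).factorial / (a.factorial * b.factorial * c.factorial)

/-- `P k n z = ∑_{b=0}^{⌊n/2⌋} multinomial(k+n-b; k, b, n-2b) z^b`. -/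
noncomputable def Pval (k n : ℕ) (z : ℂ) : ℂ :=
  ∑ b ∈ Finset.range (n / 2 + 1), (mult3 k b (n - 2 * b) : ℂ) * z ^ b

/-!
`P_{k,n}(z)` is the coefficient of `t^n` in `(1 - t - z t²)^{-(k+1)}`; this generating function
explains the Pascal rule, the absorption rule and the three-term recurrence in `n`, which come
down, coefficientwise, to `(a+1) M(a+1,b,c) = (a+b+c+1) M(a,b,c)` and its analogues in `b`, `c`.

Take a root `z ≠ 0` of `P_{d,d}` (it has positive degree and `P_{d,d}(0) ≠ 0`) and write
`A_n = P_{d+1,n}(z)`. The recurrences give `A_{d-1} = -2z A_{d-2}`, `A_{d+1} = (1+3z) A_{d-1}`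
and `(d+2)·det = -(d+1) A_{d-2} A_{d+1}`. Two consecutive `A_n` cannot vanish, as the three-term
recurrence would carry the zeros down to `A_0 = 1`; hence `A_{d-2}, A_{d-1} ≠ 0`. Finally
`z ≠ -1/3`, because `(n+1) P_{n+1,n+1}(-1/3) = (3n+2) P_{n,n}(-1/3)`.
-/

open Polynomial Finset
open scoped Nat

lemma mult3_mul_factorial (a b c : ℕ) : mult3 a b c * (a ! * b ! * c !) = (a + b + c)! :=
  Nat.div_mul_cancel <|
    (Nat.mul_dvd_mul_right (Nat.factorial_mul_factorial_dvd_factorial_add a b) _).trans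
      (Nat.factorial_mul_factorial_dvd_factorial_add (a + b) c)

lemma mult3_ne_zero (a b c : ℕ) : mult3 a b c ≠ 0 := fun h =>
  (a + b + c).factorial_ne_zero (by rw [← mult3_mul_factorial, h, zero_mul])

lemma mult3_eq_div (a b c : ℕ) : (mult3 a b c : ℂ) = (a + b + c)! / (a ! * b ! * c !) := by
  rw [eq_div_iff (by simp [Nat.factorial_ne_zero]), ← mult3_mul_factorial]
  push_cast
  rfl

lemma succ_mul_mult3_succ_left (a b c : ℕ) :
    ((a : ℂ) + 1) * mult3 (a + 1) b c = (a + b + c + 1) * mult3 a b c := by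
  rw [mult3_eq_div, mult3_eq_div, show a + 1 + b + c = a + b + c + 1 by ring]
  push_cast [Nat.factorial_succ]
  field_simp

lemma succ_mul_mult3_succ_mid (a b c : ℕ) :
    ((b : ℂ) + 1) * mult3 a (b + 1) c = (a + b + c + 1) * mult3 a b c := by
  rw [mult3_eq_div, mult3_eq_div, show a + (b + 1) + c = a + b + c + 1 by ring]
  push_cast [Nat.factorial_succ]
  field_simp

lemma succ_mul_mult3_succ_right (a b c : ℕ) :
    ((c : ℂ) + 1) * mult3 a b (c + 1) = (a + b + c + 1) * mult3 a b c := by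
  rw [mult3_eq_div, mult3_eq_div, show a + b + (c + 1) = a + b + c + 1 by ring]
  push_cast [Nat.factorial_succ]
  field_simp

noncomputable def Ppoly (k n : ℕ) : ℂ[X] :=
  ∑ b ∈ range (n / 2 + 1), C (mult3 k b (n - 2 * b) : ℂ) * X ^ b

lemma eval_Ppoly (k n : ℕ) (z : ℂ) : (Ppoly k n).eval z = Pval k n z := by
  simp [Ppoly, Pval, eval_finsetSum]

lemma coeff_Ppoly (k n b : ℕ) :
    (Ppoly k n).coeff b = if 2 * b ≤ n then (mult3 k b (n - 2 * b) : ℂ) else 0 := by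
  simp only [Ppoly, finsetSum_coeff, coeff_C_mul_X_pow, Finset.sum_ite_eq, mem_range]
  exact if_congr (by omega) rfl rfl

lemma coeff_Ppoly_of_le {k n b : ℕ} (h : 2 * b ≤ n) :
    (Ppoly k n).coeff b = mult3 k b (n - 2 * b) := by
  rw [coeff_Ppoly, if_pos h]

lemma coeff_Ppoly_of_lt {k n b : ℕ} (h : n < 2 * b) : (Ppoly k n).coeff b = 0 := by
  rw [coeff_Ppoly, if_neg (by omega)]

-- Over `ℂ` these hold for every `b`: where the guard `2 * b ≤ n` of `coeff_Ppoly` fails, either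
-- both coefficients vanish or the factor in front does.
lemma mul_coeff_Ppoly_succ (k n b : ℕ) :
    ((n : ℂ) + 1 - 2 * b) * (Ppoly k (n + 1)).coeff b
      = ((k : ℂ) + n + 1 - b) * (Ppoly k n).coeff b := by
  rcases le_or_gt (2 * b) n with h | h
  · obtain ⟨c, rfl⟩ : ∃ c, n = 2 * b + c := ⟨n - 2 * b, by omega⟩
    rw [coeff_Ppoly_of_le (by omega), coeff_Ppoly_of_le h,
      show 2 * b + c + 1 - 2 * b = c + 1 by omega, show 2 * b + c - 2 * b = c by omega]
    push_cast
    linear_combination succ_mul_mult3_succ_right k b c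
  · rw [coeff_Ppoly_of_lt h, mul_zero]
    rcases (show n + 1 < 2 * b ∨ n + 1 = 2 * b by omega) with h' | h'
    · rw [coeff_Ppoly_of_lt (by omega), mul_zero]
    · have : (n : ℂ) + 1 = 2 * b := by exact_mod_cast h'
      rw [this, sub_self, zero_mul]

lemma mul_coeff_X_mul_Ppoly (k n b : ℕ) :
    (b : ℂ) * (Ppoly k (n + 2)).coeff b = ((k : ℂ) + n + 2 - b) * (X * Ppoly k n).coeff b := by
  rcases b with _ | b
  · simp
  rw [coeff_X_mul]
  rcases le_or_gt (2 * b) n with h | h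
  · obtain ⟨c, rfl⟩ : ∃ c, n = 2 * b + c := ⟨n - 2 * b, by omega⟩
    rw [coeff_Ppoly_of_le (by omega), coeff_Ppoly_of_le h,
      show 2 * b + c + 2 - 2 * (b + 1) = c by omega, show 2 * b + c - 2 * b = c by omega]
    push_cast
    linear_combination succ_mul_mult3_succ_mid k b c
  · rw [coeff_Ppoly_of_lt h, coeff_Ppoly_of_lt (by omega), mul_zero, mul_zero]

lemma mul_coeff_Ppoly_succ_left (k n b : ℕ) :
    ((k : ℂ) + 1) * (Ppoly (k + 1) n).coeff b
      = ((k : ℂ) + n + 1 - b) * (Ppoly k n).coeff b := by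
  rcases le_or_gt (2 * b) n with h | h
  · obtain ⟨c, rfl⟩ : ∃ c, n = 2 * b + c := ⟨n - 2 * b, by omega⟩
    rw [coeff_Ppoly_of_le h, coeff_Ppoly_of_le h, show 2 * b + c - 2 * b = c by omega]
    push_cast
    linear_combination succ_mul_mult3_succ_left k b c
  · rw [coeff_Ppoly_of_lt h, coeff_Ppoly_of_lt h, mul_zero, mul_zero]

lemma mul_coeff_X_mul_Ppoly_succ_left (k n b : ℕ) :
    ((k : ℂ) + 1) * (X * Ppoly (k + 1) n).coeff b
      = ((k : ℂ) + n + 2 - b) * (X * Ppoly k n).coeff b := by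
  rcases b with _ | b
  · simp
  rw [coeff_X_mul, coeff_X_mul, mul_coeff_Ppoly_succ_left]
  push_cast
  ring

lemma Ppoly_pascal (k n : ℕ) :
    Ppoly (k + 1) (n + 2) = Ppoly k (n + 2) + Ppoly (k + 1) (n + 1) + X * Ppoly (k + 1) n := by
  ext b
  simp only [coeff_add]
  apply mul_left_cancel₀ (show (k : ℂ) + 1 ≠ 0 by exact_mod_cast k.succ_ne_zero)
  linear_combination (norm := (push_cast; ring))
    mul_coeff_Ppoly_succ_left k (n + 2) b - mul_coeff_Ppoly_succ_left k (n + 1) b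
      + mul_coeff_Ppoly_succ k (n + 1) b - mul_coeff_X_mul_Ppoly_succ_left k n b
    + mul_coeff_X_mul_Ppoly k n b

lemma Ppoly_absorb (k n : ℕ) :
    C ((n : ℂ) + 2) * Ppoly k (n + 2)
      = C ((k : ℂ) + 1) * (Ppoly (k + 1) (n + 1) + 2 * X * Ppoly (k + 1) n) := by
  ext b
  simp only [coeff_C_mul, coeff_add, mul_assoc, ← C_ofNat]
  linear_combination (norm := (push_cast; ring))
    mul_coeff_Ppoly_succ k (n + 1) b - mul_coeff_Ppoly_succ_left k (n + 1) b
      + 2 * mul_coeff_X_mul_Ppoly k n b - 2 * mul_coeff_X_mul_Ppoly_succ_left k n b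

lemma Ppoly_three_term (k n : ℕ) :
    C ((n : ℂ) + 2) * Ppoly k (n + 2)
      = C ((n : ℂ) + k + 2) * Ppoly k (n + 1) + C ((n : ℂ) + 2 * k + 2) * (X * Ppoly k n) := by
  ext b
  simp only [coeff_C_mul, coeff_add]
  rcases le_or_gt (2 * b) (n + 2) with h | h
  · apply mul_left_cancel₀ (show (k : ℂ) + n + 2 - b ≠ 0 by
      rw [sub_ne_zero]; exact_mod_cast (by omega : k + n + 2 ≠ b))
    linear_combination (norm := (push_cast; ring))
      ((n : ℂ) + k + 2) * mul_coeff_Ppoly_succ k (n + 1) b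
        + ((n : ℂ) + 2 * k + 2) * mul_coeff_X_mul_Ppoly k n b
  · obtain ⟨b, rfl⟩ : ∃ b', b = b' + 1 := ⟨b - 1, by omega⟩
    rw [coeff_X_mul, coeff_Ppoly_of_lt h, coeff_Ppoly_of_lt (by omega),
      coeff_Ppoly_of_lt (by omega)]
    ring

lemma Pval_pascal (k n : ℕ) (z : ℂ) :
    Pval (k + 1) (n + 2) z = Pval k (n + 2) z + Pval (k + 1) (n + 1) z + z * Pval (k + 1) n z := by
  simpa [eval_Ppoly] using congrArg (eval z) (Ppoly_pascal k n)

lemma Pval_absorb (k n : ℕ) (z : ℂ) :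
    ((n : ℂ) + 2) * Pval k (n + 2) z
      = ((k : ℂ) + 1) * (Pval (k + 1) (n + 1) z + 2 * z * Pval (k + 1) n z) := by
  simpa [eval_Ppoly] using congrArg (eval z) (Ppoly_absorb k n)

lemma Pval_three_term (k n : ℕ) (z : ℂ) :
    ((n : ℂ) + 2) * Pval k (n + 2) z
      = ((n : ℂ) + k + 2) * Pval k (n + 1) z + ((n : ℂ) + 2 * k + 2) * (z * Pval k n z) := by
  simpa [eval_Ppoly] using congrArg (eval z) (Ppoly_three_term k n)

lemma Pval_zero_right (k : ℕ) (z : ℂ) : Pval k 0 z = 1 := by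
  simp [Pval, mult3_eq_div, Nat.factorial_ne_zero]

lemma Pval_one_right (k : ℕ) (z : ℂ) : Pval k 1 z = k + 1 := by
  simp [Pval, mult3_eq_div, Nat.factorial_succ, Nat.factorial_ne_zero]

lemma Pval_succ_ne_zero_of_eq_zero {k n : ℕ} {z : ℂ} (hz : z ≠ 0) (h : Pval k n z = 0) :
    Pval k (n + 1) z ≠ 0 := by
  induction n with
  | zero => simp [Pval_zero_right] at h
  | succ n ih =>
    intro h'
    have h3 := Pval_three_term k n z
    rw [h, h', mul_zero, mul_zero, zero_add] at h3
    have hc : (n : ℂ) + 2 * k + 2 ≠ 0 := by exact_mod_cast (by omega : n + 2 * k + 2 ≠ 0)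
    exact ih ((mul_eq_zero.mp ((mul_eq_zero.mp h3.symm).resolve_left hc)).resolve_left hz) h

lemma Pval_diag_eq_two_mul_add (m : ℕ) (z : ℂ) :
    Pval (m + 2) (m + 2) z = 2 * Pval (m + 2) (m + 1) z + 3 * z * Pval (m + 2) m z := by
  have hp : Pval (m + 2) (m + 2) z
      = Pval (m + 1) (m + 2) z + Pval (m + 2) (m + 1) z + z * Pval (m + 2) m z :=
    Pval_pascal (m + 1) m z
  have ha : ((m : ℂ) + 2) * Pval (m + 1) (m + 2) z
      = ((m : ℂ) + 2) * (Pval (m + 2) (m + 1) z + 2 * z * Pval (m + 2) m z) := by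
    have := Pval_absorb (m + 1) m z; push_cast at this; linear_combination this
  apply mul_left_cancel₀ (show (m : ℂ) + 2 ≠ 0 by exact_mod_cast (by omega : m + 2 ≠ 0))
  linear_combination ((m : ℂ) + 2) * hp + ha

lemma Pval_diag_succ_succ (m : ℕ) (z : ℂ) :
    ((m : ℂ) + 2) * Pval (m + 2) (m + 2) z
      = (3 * m + 5) * Pval (m + 1) (m + 1) z + (m + 2) * (1 + 3 * z) * Pval (m + 2) m z := by
  rw [Pval_diag_eq_two_mul_add]
  cases m with
  | zero =>
    norm_num [Pval_zero_right, Pval_one_right]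
    ring
  | succ m =>
    have hp : Pval (m + 3) (m + 2) z
        = Pval (m + 2) (m + 2) z + Pval (m + 3) (m + 1) z + z * Pval (m + 3) m z :=
      Pval_pascal (m + 2) m z
    have ha : ((m : ℂ) + 2) * Pval (m + 2) (m + 2) z
        = ((m : ℂ) + 3) * (Pval (m + 3) (m + 1) z + 2 * z * Pval (m + 3) m z) := by
      have := Pval_absorb (m + 2) m z; push_cast at this; linear_combination this
    push_cast
    linear_combination 2 * ((m : ℂ) + 3) * hp - ha

lemma Pval_diag_neg_one_third_ne_zero (n : ℕ) : Pval n n (-1 / 3) ≠ 0 := by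
  induction n with
  | zero => simp [Pval_zero_right]
  | succ n ih =>
    cases n with
    | zero => rw [Pval_one_right]; norm_num
    | succ m =>
      intro h
      have hrec := Pval_diag_succ_succ m (-1 / 3)
      rw [show Pval (m + 2) (m + 2) (-1 / 3) = 0 from h] at hrec
      have hc : (3 * m + 5 : ℂ) ≠ 0 := by exact_mod_cast (by omega : 3 * m + 5 ≠ 0)
      exact ih ((mul_eq_zero.mp (by linear_combination -hrec)).resolve_left hc)

section RootOfDiagonal

variable {m : ℕ} {z : ℂ}

lemma Pval_succ_eq_neg_two_mul (hroot : Pval (m + 2) (m + 2) z = 0) :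
    Pval (m + 3) (m + 1) z = -2 * z * Pval (m + 3) m z := by
  have hp : Pval (m + 3) (m + 2) z
      = Pval (m + 2) (m + 2) z + Pval (m + 3) (m + 1) z + z * Pval (m + 3) m z :=
    Pval_pascal (m + 2) m z
  have h3 := Pval_three_term (m + 3) m z
  push_cast at h3
  apply mul_left_cancel₀ (show (m : ℂ) + 3 ≠ 0 by exact_mod_cast (by omega : m + 3 ≠ 0))
  linear_combination -h3 + ((m : ℂ) + 2) * hp + ((m : ℂ) + 2) * hroot

lemma Pval_below_diag_ne_zero (hz : z ≠ 0) (hroot : Pval (m + 2) (m + 2) z = 0) :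
    Pval (m + 3) m z ≠ 0 := fun h =>
  Pval_succ_ne_zero_of_eq_zero hz h (by rw [Pval_succ_eq_neg_two_mul hroot, h, mul_zero])

lemma Pval_succ_below_diag_ne_zero (hz : z ≠ 0) (hroot : Pval (m + 2) (m + 2) z = 0) :
    Pval (m + 3) (m + 1) z ≠ 0 := by
  rw [Pval_succ_eq_neg_two_mul hroot]
  exact mul_ne_zero (mul_ne_zero (by norm_num) hz) (Pval_below_diag_ne_zero hz hroot)

lemma Pval_succ_diag_eq (hroot : Pval (m + 2) (m + 2) z = 0) :
    Pval (m + 3) (m + 3) z = (1 + 3 * z) * Pval (m + 3) (m + 1) z := by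
  have hp : Pval (m + 3) (m + 2) z
      = Pval (m + 2) (m + 2) z + Pval (m + 3) (m + 1) z + z * Pval (m + 3) m z :=
    Pval_pascal (m + 2) m z
  linear_combination Pval_diag_eq_two_mul_add (m + 1) z + 2 * hp + 2 * hroot
    + Pval_succ_eq_neg_two_mul hroot

lemma Pval_succ_diag_ne_zero (hz : z ≠ 0) (hroot : Pval (m + 2) (m + 2) z = 0) :
    Pval (m + 3) (m + 3) z ≠ 0 := by
  have h3 : 1 + 3 * z ≠ 0 := by
    intro h
    obtain rfl : z = -1 / 3 := by linear_combination h / 3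
    exact Pval_diag_neg_one_third_ne_zero _ hroot
  rw [Pval_succ_diag_eq hroot]
  exact mul_ne_zero h3 (Pval_succ_below_diag_ne_zero hz hroot)

lemma Pval_det_eq (hroot : Pval (m + 2) (m + 2) z = 0) :
    ((m : ℂ) + 4) * (Pval (m + 3) (m + 1) z * Pval (m + 4) (m + 1) z
        - Pval (m + 3) m z * Pval (m + 4) (m + 2) z)
      = -((m : ℂ) + 3) * Pval (m + 3) m z * Pval (m + 3) (m + 3) z := by
  have ha := Pval_absorb (m + 3) (m + 1) z
  push_cast at ha
  linear_combination ((m : ℂ) + 4) * Pval (m + 4) (m + 1) z * Pval_succ_eq_neg_two_mul hroot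
    + Pval (m + 3) m z * ha

end RootOfDiagonal

lemma exists_Pval_diag_eq_zero {d : ℕ} (hd : 2 ≤ d) :
    ∃ z : ℂ, z ≠ 0 ∧ Pval d d z = 0 := by
  have hdeg : 0 < (Ppoly d d).degree := by
    refine lt_of_lt_of_le ?_ (le_degree_of_ne_zero (n := d / 2) ?_)
    · exact_mod_cast (by omega : 0 < d / 2)
    · rw [coeff_Ppoly_of_le (by omega)]
      exact_mod_cast mult3_ne_zero _ _ _
  obtain ⟨z, hz⟩ := Complex.exists_root hdeg
  refine ⟨z, ?_, by rwa [IsRoot, eval_Ppoly] at hz⟩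
  rintro rfl
  rw [IsRoot, ← coeff_zero_eq_eval_zero, coeff_Ppoly_of_le (by omega)] at hz
  exact mult3_ne_zero _ _ _ (by exact_mod_cast hz)

theorem stmt13 (d : ℕ) (hd : 2 ≤ d) :
    ∃ lam : ℂ, lam ≠ 0 ∧ Pval d d lam = 0 ∧ Pval (d+1) (d+1) lam ≠ 0 ∧
      Pval (d+1) (d-1) lam * Pval (d+2) (d-1) lam
        - Pval (d+1) (d-2) lam * Pval (d+2) d lam ≠ 0 := by
  obtain ⟨m, rfl⟩ : ∃ m, d = m + 2 := ⟨d - 2, by omega⟩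
  obtain ⟨z, hz, hroot⟩ := exists_Pval_diag_eq_zero hd
  have hdiag := Pval_succ_diag_ne_zero hz hroot
  refine ⟨z, hz, hroot, hdiag, fun hdet => ?_⟩
  have h := Pval_det_eq hroot
  simp only [show m + 2 - 1 = m + 1 by omega, show m + 2 - 2 = m by omega] at hdet
  rw [hdet, mul_zero] at h
  exact mul_ne_zero (mul_ne_zero (neg_ne_zero.mpr (by exact_mod_cast (by omega : m + 3 ≠ 0)))
    (Pval_below_diag_ne_zero hz hroot)) hdiag h.symm
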